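/- For every j ∈ {1,…,m} and every u ∈ (x_{j−1}, x_j), the product of the boundary values of D from above and below equals s_j: lim_{ε→0⁺} D(u+iε)·D(u−iε) = s_j. -/

import Mathlib

open Complex Filter Topology Finset

/-- `β_j = (1/(2πi)) log(s_j/s_{j+1})`. -/
noncomputable def betaCoef (s : ℕ → ℝ) (j : ℕ) : ℂ :=
  1 / (2 * ↑Real.pi * Complex.I) * ↑(Real.log (s j / s (j + 1)))

/-- `D(z) = ∏_{j=0}^m (z−x_j)^{β_j}` for `Im z > 0`, and
`D(z) = ∏_{j=0}^m (z−x_j)^{−β_j}` for `Im z < 0` (principal powers). -/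
noncomputable def szegoD (m : ℕ) (x : ℕ → ℝ) (s : ℕ → ℝ) (z : ℂ) : ℂ :=
  if 0 < z.im then ∏ j ∈ Finset.Icc 0 m, (z - ↑(x j)) ^ betaCoef s j
  else ∏ j ∈ Finset.Icc 0 m, (z - ↑(x j)) ^ (-betaCoef s j)

lemma base_tendsto (w : ℝ) :
    Tendsto (fun ε : ℝ => ((w : ℂ) + ε * Complex.I)) (𝓝[>] (0:ℝ)) (𝓝 (w : ℂ)) := by
  have h : Tendsto (fun ε : ℝ => ((w : ℂ) + ε * Complex.I)) (𝓝 (0:ℝ)) (𝓝 ((w:ℂ) + (0:ℝ) * Complex.I)) :=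
    (by fun_prop : Continuous fun ε : ℝ => ((w : ℂ) + ε * Complex.I)).tendsto 0
  simpa using h.mono_left nhdsWithin_le_nhds

lemma base_tendsto' (w : ℝ) :
    Tendsto (fun ε : ℝ => ((w : ℂ) - ε * Complex.I)) (𝓝[>] (0:ℝ)) (𝓝 (w : ℂ)) := by
  have h : Tendsto (fun ε : ℝ => ((w : ℂ) - ε * Complex.I)) (𝓝 (0:ℝ)) (𝓝 ((w:ℂ) - (0:ℝ) * Complex.I)) :=
    (by fun_prop : Continuous fun ε : ℝ => ((w : ℂ) - ε * Complex.I)).tendsto 0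
  simpa using h.mono_left nhdsWithin_le_nhds

lemma factor_pos {w : ℝ} (hw : 0 < w) (β : ℂ) :
    Tendsto (fun ε : ℝ => ((w : ℂ) + ε * Complex.I) ^ β * ((w : ℂ) - ε * Complex.I) ^ (-β))
      (𝓝[>] (0:ℝ)) (𝓝 1) := by
  have hc : ContinuousAt (fun z : ℂ => z ^ β) (w : ℂ) :=
    continuousAt_cpow_const (by rw [Complex.mem_slitPlane_iff]; left; simpa using hw)
  have hc' : ContinuousAt (fun z : ℂ => z ^ (-β)) (w : ℂ) :=
    continuousAt_cpow_const (by rw [Complex.mem_slitPlane_iff]; left; simpa using hw)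
  have h := (hc.tendsto.comp (base_tendsto w)).mul (hc'.tendsto.comp (base_tendsto' w))
  have hval : (w : ℂ) ^ β * (w : ℂ) ^ (-β) = 1 := by
    rw [Complex.cpow_neg]
    exact mul_inv_cancel₀ (by
      simp only [ne_eq, Complex.cpow_eq_zero_iff, not_and_or]
      exact Or.inl (by exact_mod_cast hw.ne'))
  rw [hval] at h
  exact h

lemma log_above {w : ℝ} (hw : w < 0) :
    Tendsto (fun ε : ℝ => Complex.log ((w : ℂ) + ε * Complex.I)) (𝓝[>] (0:ℝ))
      (𝓝 (Real.log |w| + Real.pi * Complex.I)) := by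
  have hb : Tendsto (fun ε : ℝ => ((w : ℂ) + ε * Complex.I)) (𝓝[>] (0:ℝ))
      (𝓝[{z : ℂ | 0 ≤ z.im}] (w : ℂ)) := by
    refine tendsto_nhdsWithin_of_tendsto_nhds_of_eventually_within _ (base_tendsto w) ?_
    filter_upwards [self_mem_nhdsWithin] with ε (hε : 0 < ε)
    simp [hε.le]
  have := (Complex.tendsto_log_nhdsWithin_im_nonneg_of_re_neg_of_im_zero
    (z := (w : ℂ)) (by simpa using hw) (by simp)).comp hb
  simpa [Function.comp, Function.comp_def] using this

lemma log_below {w : ℝ} (hw : w < 0) :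
    Tendsto (fun ε : ℝ => Complex.log ((w : ℂ) - ε * Complex.I)) (𝓝[>] (0:ℝ))
      (𝓝 (Real.log |w| - Real.pi * Complex.I)) := by
  have hb : Tendsto (fun ε : ℝ => ((w : ℂ) - ε * Complex.I)) (𝓝[>] (0:ℝ))
      (𝓝[{z : ℂ | z.im < 0}] (w : ℂ)) := by
    refine tendsto_nhdsWithin_of_tendsto_nhds_of_eventually_within _ (base_tendsto' w) ?_
    filter_upwards [self_mem_nhdsWithin] with ε (hε : 0 < ε)
    simp [hε]
  have := (Complex.tendsto_log_nhdsWithin_im_neg_of_re_neg_of_im_zero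
    (z := (w : ℂ)) (by simpa using hw) (by simp)).comp hb
  simpa [Function.comp, Function.comp_def] using this

lemma factor_neg {w : ℝ} (hw : w < 0) (β : ℂ) :
    Tendsto (fun ε : ℝ => ((w : ℂ) + ε * Complex.I) ^ β * ((w : ℂ) - ε * Complex.I) ^ (-β))
      (𝓝[>] (0:ℝ)) (𝓝 (Complex.exp (2 * Real.pi * Complex.I * β))) := by
  have hdiff : Tendsto (fun ε : ℝ =>
      (Complex.log ((w : ℂ) + ε * Complex.I) - Complex.log ((w : ℂ) - ε * Complex.I)) * β)
      (𝓝[>] (0:ℝ)) (𝓝 (2 * Real.pi * Complex.I * β)) := by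
    have h := ((log_above hw).sub (log_below hw)).mul_const β
    have : ((Real.log |w| + Real.pi * Complex.I) - (Real.log |w| - Real.pi * Complex.I)) * β
        = 2 * Real.pi * Complex.I * β := by ring
    rwa [this] at h
  have h := (Complex.continuous_exp.tendsto _).comp hdiff
  refine h.congr' ?_
  filter_upwards [self_mem_nhdsWithin] with ε (hε : 0 < ε)
  have h1 : ((w : ℂ) + ε * Complex.I) ≠ 0 := by
    intro h
    have := congrArg Complex.im h
    simp at this
    exact hε.ne' this
  have h2 : ((w : ℂ) - ε * Complex.I) ≠ 0 := by
    intro h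
    have := congrArg Complex.im h
    simp at this
    exact hε.ne' this
  simp only [Function.comp]
  rw [Complex.cpow_def_of_ne_zero h1, Complex.cpow_def_of_ne_zero h2, sub_mul,
    Complex.exp_sub, mul_neg, Complex.exp_neg]
  ring

lemma exp_two_pi_beta {r : ℝ} (hr : 0 < r) :
    Complex.exp (2 * Real.pi * Complex.I * (1 / (2 * ↑Real.pi * Complex.I) * ↑(Real.log r)))
      = (r : ℂ) := by
  have hne : (2 * (Real.pi : ℂ) * Complex.I) ≠ 0 := by
    simp [Real.pi_ne_zero, Complex.I_ne_zero]
  have : 2 * (Real.pi:ℂ) * Complex.I * (1 / (2 * ↑Real.pi * Complex.I) * ↑(Real.log r))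
      = ↑(Real.log r) := by
    field_simp
  rw [this, ← Complex.ofReal_exp, Real.exp_log hr]

lemma telescope (s : ℕ → ℝ) : ∀ n j : ℕ, j ≤ n → (∀ k, j < k → k ≤ n → s k ≠ 0) →
    ∏ k ∈ Finset.Icc j n, ((s k : ℂ) / (s (k+1) : ℂ)) = (s j : ℂ) / (s (n+1) : ℂ) := by
  intro n
  induction n with
  | zero => intro j hj _; interval_cases j; simp
  | succ n ih =>
    intro j hj hne
    rcases Nat.lt_or_ge j (n+1) with h | h
    · rw [Finset.prod_Icc_succ_top hj, ih j (Nat.lt_succ_iff.mp h)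
        (fun k hk hk' => hne k hk (hk'.trans (Nat.le_succ n)))]
      have : (s (n+1) : ℂ) ≠ 0 := by
        exact_mod_cast hne (n+1) h (le_refl _)
      field_simp
    · have : j = n + 1 := le_antisymm hj h
      subst this
      simp

theorem szegoD_boundary_product
    (m : ℕ) (hm : 1 ≤ m) (x s : ℕ → ℝ)
    (hx : ∀ j, j < m → x j < x (j + 1))
    (hs : ∀ j, 1 ≤ j → j ≤ m → 0 < s j)
    (hs0 : s 0 = 1) (hsm : s (m + 1) = 1)
    (j : ℕ) (hj1 : 1 ≤ j) (hjm : j ≤ m)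
    (u : ℝ) (hu : u ∈ Set.Ioo (x (j - 1)) (x j)) :
    Filter.Tendsto
      (fun ε : ℝ => szegoD m x s (↑u + ↑ε * Complex.I) * szegoD m x s (↑u - ↑ε * Complex.I))
      (nhdsWithin 0 (Set.Ioi 0)) (nhds (↑(s j) : ℂ)) := by

  obtain ⟨hu1, hu2⟩ := hu
  have hmono : ∀ a b : ℕ, a ≤ b → b ≤ m → x a ≤ x b := by
    intro a b hab
    induction hab with
    | refl => intro _; exact le_refl _
    | @step c hc ih =>
      intro hbm
      exact (ih (by omega)).trans (hx c (by omega)).le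
  set β := betaCoef s with hβ
  have key : ∀ k, k ≤ m →
      Tendsto (fun ε : ℝ => ((u:ℂ) + ↑ε * Complex.I - ↑(x k)) ^ β k *
          ((u:ℂ) - ↑ε * Complex.I - ↑(x k)) ^ (-(β k))) (𝓝[>] (0:ℝ))
        (𝓝 (if k < j then 1 else ((s k : ℂ) / (s (k+1) : ℂ)))) := by
    intro k hk
    have heq : ∀ ε : ℝ, ((u:ℂ) + ↑ε * Complex.I - ↑(x k)) = ((u - x k : ℝ) : ℂ) + ↑ε * Complex.I := by
      intro ε; push_cast; ring
    have heq' : ∀ ε : ℝ, ((u:ℂ) - ↑ε * Complex.I - ↑(x k)) = ((u - x k : ℝ) : ℂ) - ↑ε * Complex.I := by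
      intro ε; push_cast; ring
    by_cases hkj : k < j
    · have hw : 0 < u - x k := by
        have : x k ≤ x (j-1) := hmono k (j-1) (by omega) (by omega)
        linarith
      simpa [hkj, heq, heq'] using factor_pos hw (β k)
    · have hw : u - x k < 0 := by
        have : x j ≤ x k := hmono j k (by omega) hk
        linarith
      have h := factor_neg hw (β k)
      have hr : 0 < s k / s (k+1) := by
        have h1 : 0 < s k := hs k (by omega) hk
        have h2 : 0 < s (k+1) := by
          rcases Nat.lt_or_ge k m with hlt | hge
          · exact hs (k+1) (by omega) (by omega)
          · have : k = m := le_antisymm hk hge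
            rw [this, hsm]; norm_num
        positivity
      have hval : Complex.exp (2 * Real.pi * Complex.I * (β k)) = ((s k : ℂ) / (s (k+1) : ℂ)) := by
        rw [hβ, betaCoef, exp_two_pi_beta hr]
        push_cast
        ring
      rw [hval] at h
      simpa [hkj, heq, heq'] using h
  have hprod := tendsto_finset_prod (Finset.Icc 0 m)
    (fun k hk => key k (by simpa using (Finset.mem_Icc.mp hk).2))
  have hlim : (∏ k ∈ Finset.Icc 0 m, (if k < j then 1 else ((s k : ℂ) / (s (k+1) : ℂ)))) = (s j : ℂ) := by
    rw [← Finset.prod_filter_mul_prod_filter_not (Finset.Icc 0 m) (fun k => k < j)]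
    have h1 : (∏ k ∈ (Finset.Icc 0 m).filter (fun k => k < j),
        (if k < j then (1:ℂ) else ((s k : ℂ) / (s (k+1) : ℂ)))) = 1 := by
      refine Finset.prod_eq_one fun k hk => ?_
      rw [if_pos (Finset.mem_filter.mp hk).2]
    have h2 : (Finset.Icc 0 m).filter (fun k => ¬ k < j) = Finset.Icc j m := by
      ext k; simp only [Finset.mem_filter, Finset.mem_Icc]; omega
    rw [h1, h2, one_mul]
    have h3 : (∏ k ∈ Finset.Icc j m, (if k < j then (1:ℂ) else ((s k : ℂ) / (s (k+1) : ℂ))))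
        = ∏ k ∈ Finset.Icc j m, ((s k : ℂ) / (s (k+1) : ℂ)) := by
      refine Finset.prod_congr rfl fun k hk => ?_
      rw [if_neg (by have := (Finset.mem_Icc.mp hk).1; omega)]
    rw [h3, telescope s m j hjm (fun k hk hk' => (hs k (by omega) hk').ne'), hsm]
    simp
  rw [← hlim]
  refine hprod.congr' ?_
  filter_upwards [self_mem_nhdsWithin] with ε (hε : 0 < ε)
  have him1 : ((u:ℂ) + ↑ε * Complex.I).im = ε := by simp
  have him2 : ((u:ℂ) - ↑ε * Complex.I).im = -ε := by simp
  rw [szegoD, szegoD, if_pos (by rw [him1]; exact hε), if_neg (by rw [him2]; linarith),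
    ← Finset.prod_mul_distrib]
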